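/- In the IRL1 setting, assume additionally that the level set {x : F(x) ≤ F(x^0, ε^0)} is bounded, where F(x) = f(x) + λ Σ_{i=1}^n |x_i|^p. Then every iterate x^k lies in this level set (hence the sequence {x^k} is bounded), and there exists a constant C > 0 such that ‖∇Q_k(x^{k+1})‖_∞ ≤ C for all k ∈ ℕ. -/

import Mathlib

/-!
Each IRL1 step is a majorize–minimize step. By the descent lemma for `f` and the `M`-strong
convexity of the model (`M > L_f / 2`), the new iterate decreases `f + λ Σᵢ wᵢᵏ |·ᵢ|`; by
concavity of `t ↦ t ^ p` this function majorizes `F(·, εᵏ)` up to a constant, with equality at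
`xᵏ`. Together with `εᵏ⁺¹ ≤ εᵏ` this makes `F(xᵏ, εᵏ)` nonincreasing, so
`F(xᵏ) ≤ F(xᵏ, εᵏ) ≤ F(x⁰, ε⁰)` and the iterates stay in the bounded level set. On a bounded set,
`∇Q_k(x^{k+1})` is controlled by `∇Q_k(xᵏ) = ∇f(xᵏ)` and the Lipschitz bounds on `∇Q_k`, `∇f`.
-/

open Filter Topology

/-- The weight function `w(t, s) = p(|t| + s)^(p-1)`. -/
noncomputable def wfun (p t s : ℝ) : ℝ := p * (|t| + s) ^ (p - 1)

/-- The IRL1 setting (Algorithm 2.1 of the paper): fixed data `p ∈ (0,1)`, `λ > 0`,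
`μ ∈ (0,1)`, a differentiable `f` with `Lf`-Lipschitz gradient (`Lf ≥ 0`), iterates
`x^k`, positive parameters `ε^k` with `ε^{k+1} ≤ μ ε^k` componentwise, and for each `k`
a differentiable model `Q_k` with `∇Q_k(x^k) = ∇f(x^k)`, `M`-strongly convex with
`M > Lf/2` (strong convexity meaning `z ↦ Q_k z - (M/2)‖z‖²` is convex), `∇Q_k`
`L`-Lipschitz, such that `x^{k+1}` is a global minimizer of
`G(·; x^k, ε^k) = Q_k(·) + λ Σᵢ w(xᵢ^k, εᵢ^k)|·ᵢ|`. -/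
structure IRL1 (n : ℕ) where
  p : ℝ
  lam : ℝ
  mu : ℝ
  Lf : ℝ
  M : ℝ
  L : ℝ
  f : EuclideanSpace ℝ (Fin n) → ℝ
  x : ℕ → EuclideanSpace ℝ (Fin n)
  eps : ℕ → Fin n → ℝ
  Q : ℕ → EuclideanSpace ℝ (Fin n) → ℝ
  hp0 : 0 < p
  hp1 : p < 1
  hlam : 0 < lam
  hmu0 : 0 < mu
  hmu1 : mu < 1
  hLf : 0 ≤ Lf
  hM : Lf / 2 < M
  hf_diff : Differentiable ℝ f
  hf_lip : ∀ a b, ‖gradient f a - gradient f b‖ ≤ Lf * ‖a - b‖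
  heps_pos : ∀ k i, 0 < eps k i
  heps_dec : ∀ k i, eps (k + 1) i ≤ mu * eps k i
  hQ_diff : ∀ k, Differentiable ℝ (Q k)
  hQ_grad : ∀ k, gradient (Q k) (x k) = gradient f (x k)
  hQ_sconv : ∀ k, ConvexOn ℝ Set.univ (fun z => Q k z - M / 2 * ‖z‖ ^ 2)
  hQ_lip : ∀ k a b, ‖gradient (Q k) a - gradient (Q k) b‖ ≤ L * ‖a - b‖
  hmin : ∀ k, ∀ z : EuclideanSpace ℝ (Fin n),
    Q k (x (k + 1)) + lam * ∑ i, wfun p (x k i) (eps k i) * |x (k + 1) i|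
      ≤ Q k z + lam * ∑ i, wfun p (x k i) (eps k i) * |z i|

/-- The smoothed objective `F(x, ε) = f(x) + λ Σᵢ (|xᵢ| + εᵢ)^p`. -/
noncomputable def IRL1.Feps {n : ℕ} (S : IRL1 n)
    (z : EuclideanSpace ℝ (Fin n)) (e : Fin n → ℝ) : ℝ :=
  S.f z + S.lam * ∑ i, (|z i| + e i) ^ S.p

/-- The objective `F(x) = f(x) + λ Σᵢ |xᵢ|^p`. -/
noncomputable def IRL1.Fobj {n : ℕ} (S : IRL1 n) (z : EuclideanSpace ℝ (Fin n)) : ℝ :=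
  S.f z + S.lam * ∑ i, |z i| ^ S.p

/-- The subproblem objective `G(z; x^k, ε^k)`. -/
noncomputable def IRL1.G {n : ℕ} (S : IRL1 n) (k : ℕ)
    (z : EuclideanSpace ℝ (Fin n)) : ℝ :=
  S.Q k z + S.lam * ∑ i, wfun S.p (S.x k i) (S.eps k i) * |z i|

/-- The level set `{x : F(x) ≤ F(x⁰, ε⁰)}` is bounded. -/
def IRL1.LevelBounded {n : ℕ} (S : IRL1 n) : Prop :=
  Bornology.IsBounded {z : EuclideanSpace ℝ (Fin n) | S.Fobj z ≤ S.Feps (S.x 0) (S.eps 0)}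

section InnerProductSpace

variable {E : Type*} [NormedAddCommGroup E] [InnerProductSpace ℝ E]

lemma StrongConvexOn.apply_add_smul_sub_le {G : E → ℝ} {M : ℝ} (hG : StrongConvexOn Set.univ M G)
    (x y : E) {t : ℝ} (ht₀ : 0 ≤ t) (ht₁ : t ≤ 1) :
    G (x + t • (y - x)) ≤ (1 - t) * G x + t * G y - (1 - t) * t * (M / 2 * ‖y - x‖ ^ 2) := by
  have h := hG.2 (Set.mem_univ x) (Set.mem_univ y) (sub_nonneg.2 ht₁) ht₀ (by ring)
  rw [norm_sub_rev] at h
  simpa only [smul_eq_mul, show (1 - t) • x + t • y = x + t • (y - x) by module] using h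

lemma StrongConvexOn.add_sq_le_of_forall_le {G : E → ℝ} {M : ℝ}
    (hG : StrongConvexOn Set.univ M G) {x : E} (hx : ∀ z, G x ≤ G z) (y : E) :
    G x + M / 2 * ‖y - x‖ ^ 2 ≤ G y := by
  have hlim : Tendsto (fun t : ℝ => G x + (1 - t) * (M / 2 * ‖y - x‖ ^ 2)) (𝓝[>] 0)
      (𝓝 (G x + M / 2 * ‖y - x‖ ^ 2)) := by
    have : Continuous (fun t : ℝ => G x + (1 - t) * (M / 2 * ‖y - x‖ ^ 2)) := by fun_prop
    simpa using this.tendsto 0 |>.mono_left nhdsWithin_le_nhds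
  refine le_of_tendsto hlim ?_
  filter_upwards [Ioo_mem_nhdsGT one_pos] with t ⟨ht₀, ht₁⟩
  have hconv := hG.apply_add_smul_sub_le x y ht₀.le ht₁.le
  have hmin := hx (x + t • (y - x))
  refine le_of_mul_le_mul_left ?_ ht₀
  linarith

variable [CompleteSpace E]

lemma HasGradientAt.hasDerivAt_comp_add_smul {f : E → ℝ} {g x d : E} {t : ℝ}
    (h : HasGradientAt f g (x + t • d)) :
    HasDerivAt (fun s : ℝ => f (x + s • d)) (inner ℝ g d) t := by
  have hline : HasDerivAt (fun s : ℝ => x + s • d) d t := by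
    simpa using ((hasDerivAt_id t).smul_const d).const_add x
  exact (h.hasFDerivAt.comp_hasDerivAt t hline).congr_deriv
    (InnerProductSpace.toDual_apply_apply ..)

lemma StrongConvexOn.add_inner_add_sq_le {G : E → ℝ} {M : ℝ}
    (hG : StrongConvexOn Set.univ M G) {x g : E} (hg : HasGradientAt G g x) (y : E) :
    G x + inner ℝ g (y - x) + M / 2 * ‖y - x‖ ^ 2 ≤ G y := by
  have hderiv : HasDerivAt (fun t : ℝ => G (x + t • (y - x))) (inner ℝ g (y - x)) 0 :=
    HasGradientAt.hasDerivAt_comp_add_smul (by simpa using hg)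
  have hbound : Tendsto (fun t : ℝ => G y - G x - (1 - t) * (M / 2 * ‖y - x‖ ^ 2)) (𝓝[>] 0)
      (𝓝 (G y - G x - M / 2 * ‖y - x‖ ^ 2)) := by
    have : Continuous (fun t : ℝ => G y - G x - (1 - t) * (M / 2 * ‖y - x‖ ^ 2)) := by fun_prop
    simpa using this.tendsto 0 |>.mono_left nhdsWithin_le_nhds
  have := le_of_tendsto_of_tendsto hderiv.tendsto_slope_zero_right hbound <| by
    filter_upwards [Ioo_mem_nhdsGT one_pos] with t ⟨ht₀, ht₁⟩
    have hconv := hG.apply_add_smul_sub_le x y ht₀.le ht₁.le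
    rw [zero_add, zero_smul, add_zero, smul_eq_mul, inv_mul_le_iff₀ ht₀]
    linarith
  linarith

lemma le_add_inner_gradient_add_sq_of_lipschitz {f : E → ℝ} (hf : Differentiable ℝ f) {K : ℝ}
    (hK : ∀ a b, ‖gradient f a - gradient f b‖ ≤ K * ‖a - b‖) (x y : E) :
    f y ≤ f x + inner ℝ (gradient f x) (y - x) + K / 2 * ‖y - x‖ ^ 2 := by
  set d := y - x
  set φ : ℝ → ℝ := fun t => f (x + t • d) - t * inner ℝ (gradient f x) d - K / 2 * ‖d‖ ^ 2 * t ^ 2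
  have hφ : ∀ t, HasDerivAt φ
      (inner ℝ (gradient f (x + t • d)) d - inner ℝ (gradient f x) d - K * ‖d‖ ^ 2 * t) t := by
    intro t
    have h₂ := (hasDerivAt_pow 2 t).const_mul (K / 2 * ‖d‖ ^ 2)
    have := (((hf (x + t • d)).hasGradientAt.hasDerivAt_comp_add_smul).sub
      ((hasDerivAt_id t).mul_const (inner ℝ (gradient f x) d))).sub h₂
    refine this.congr_deriv ?_
    norm_num
    ring
  have hanti : AntitoneOn φ (Set.Ici 0) := by
    refine antitoneOn_of_hasDerivWithinAt_nonpos (convex_Ici 0)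
      (fun t _ => (hφ t).continuousAt.continuousWithinAt) (fun t _ => (hφ t).hasDerivWithinAt) ?_
    intro t ht
    rw [interior_Ici] at ht
    have hlip : ‖gradient f (x + t • d) - gradient f x‖ ≤ K * (t * ‖d‖) := by
      simpa [norm_smul, abs_of_pos (Set.mem_Ioi.1 ht)] using hK (x + t • d) x
    have hcs := real_inner_le_norm (gradient f (x + t • d) - gradient f x) d
    rw [inner_sub_left] at hcs
    nlinarith [norm_nonneg d]
  have := hanti (Set.mem_Ici.2 le_rfl) (show (0 : ℝ) ≤ 1 from zero_le_one) zero_le_one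
  simp only [φ, zero_smul, one_smul, add_zero, d, add_sub_cancel] at this
  linarith

lemma sufficient_decrease_of_forall_model_le {f Q h : E → ℝ} {Lf M : ℝ} {x x' : E}
    (hf : Differentiable ℝ f) (hf_lip : ∀ a b, ‖gradient f a - gradient f b‖ ≤ Lf * ‖a - b‖)
    (hQ : DifferentiableAt ℝ Q x) (hQf : gradient Q x = gradient f x)
    (hQ_conv : StrongConvexOn Set.univ M Q) (hh : ConvexOn ℝ Set.univ h)
    (hx' : ∀ z, Q x' + h x' ≤ Q z + h z) :
    f x' + h x' + (M - Lf / 2) * ‖x' - x‖ ^ 2 ≤ f x + h x := by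
  have hG : StrongConvexOn Set.univ M (Q + h) := by
    have := hQ_conv.add (uniformConvexOn_zero.2 hh)
    rwa [add_zero] at this
  have hdescent := le_add_inner_gradient_add_sq_of_lipschitz hf hf_lip x x'
  have hQ_lower := hQ_conv.add_inner_add_sq_le hQ.hasGradientAt x'
  have hG_growth := hG.add_sq_le_of_forall_le hx' x
  rw [hQf] at hQ_lower
  rw [norm_sub_rev] at hG_growth
  simp only [Pi.add_apply] at hG_growth
  linarith

end InnerProductSpace

lemma norm_le_add_abs_mul_of_lipschitz {E F : Type*} [SeminormedAddCommGroup E]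
    [SeminormedAddCommGroup F] {g : E → F} {K : ℝ} (hg : ∀ a b, ‖g a - g b‖ ≤ K * ‖a - b‖)
    (a b : E) :
    ‖g a‖ ≤ ‖g b‖ + |K| * (‖a‖ + ‖b‖) := by
  calc ‖g a‖ ≤ ‖g b‖ + ‖g a - g b‖ := norm_le_insert' _ _
    _ ≤ ‖g b‖ + |K| * (‖a‖ + ‖b‖) := by
      gcongr
      calc ‖g a - g b‖ ≤ K * ‖a - b‖ := hg a b
        _ ≤ |K| * ‖a - b‖ := by gcongr; exact le_abs_self K
        _ ≤ |K| * (‖a‖ + ‖b‖) := by gcongr; exact norm_sub_le a b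

lemma convexOn_sum_mul_abs {ι : Type*} [Fintype ι] {c : ι → ℝ} (hc : ∀ i, 0 ≤ c i) :
    ConvexOn ℝ Set.univ (fun z : EuclideanSpace ℝ ι => ∑ i, c i * |z i|) := by
  refine ⟨convex_univ, fun x _ y _ a b ha hb hab => ?_⟩
  simp only [smul_eq_mul, Finset.mul_sum, ← Finset.sum_add_distrib]
  refine Finset.sum_le_sum fun i _ => ?_
  have habs : |a * x i + b * y i| ≤ a * |x i| + b * |y i| := by
    simpa [abs_mul, abs_of_nonneg ha, abs_of_nonneg hb] using abs_add_le (a * x i) (b * y i)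
  calc c i * |(a • x + b • y) i| = c i * |a * x i + b * y i| := rfl
    _ ≤ c i * (a * |x i| + b * |y i|) := by gcongr; exact hc i
    _ = a * (c i * |x i|) + b * (c i * |y i|) := by ring

-- Concavity of `r ↦ r ^ p`, in the form of weighted AM-GM divided by `a ^ (1 - p)`.
lemma Real.rpow_le_rpow_add_mul_rpow_sub_one_mul {a b p : ℝ} (ha : 0 < a) (hb : 0 ≤ b)
    (hp₀ : 0 ≤ p) (hp₁ : p ≤ 1) :
    b ^ p ≤ a ^ p + p * a ^ (p - 1) * (b - a) := by
  have hamgm := Real.geom_mean_le_arith_mean2_weighted (sub_nonneg.2 hp₁) hp₀ ha.le hb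
    (sub_add_cancel 1 p)
  have hpos : 0 < a ^ (1 - p) := Real.rpow_pos_of_pos ha _
  rw [← mul_le_mul_iff_right₀ hpos]
  have hcancel₁ : a ^ (1 - p) * a ^ p = a := by
    rw [← Real.rpow_add ha, sub_add_cancel, Real.rpow_one]
  have hcancel₂ : a ^ (1 - p) * a ^ (p - 1) = 1 := by
    rw [← Real.rpow_add ha, sub_add_sub_cancel', sub_self, Real.rpow_zero]
  calc a ^ (1 - p) * b ^ p ≤ (1 - p) * a + p * b := hamgm
    _ = a ^ (1 - p) * a ^ p + p * (a ^ (1 - p) * a ^ (p - 1)) * (b - a) := by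
      rw [hcancel₁, hcancel₂]; ring
    _ = a ^ (1 - p) * (a ^ p + p * a ^ (p - 1) * (b - a)) := by ring

lemma wfun_nonneg {p t s : ℝ} (hp : 0 ≤ p) (hs : 0 ≤ s) : 0 ≤ wfun p t s :=
  mul_nonneg hp (Real.rpow_nonneg (add_nonneg (abs_nonneg t) hs) _)

namespace IRL1

variable {n : ℕ} (S : IRL1 n)

lemma Feps_zero (z : EuclideanSpace ℝ (Fin n)) : S.Feps z 0 = S.Fobj z := by
  simp [Feps, Fobj]

lemma Feps_mono (z : EuclideanSpace ℝ (Fin n)) {e e' : Fin n → ℝ} (he : 0 ≤ e) (hee' : e ≤ e') :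
    S.Feps z e ≤ S.Feps z e' := by
  unfold Feps
  have := S.hp0
  have := S.hlam
  gcongr with i
  · exact add_nonneg (abs_nonneg _) (he i)
  · exact hee' i

lemma Fobj_le_Feps (z : EuclideanSpace ℝ (Fin n)) {e : Fin n → ℝ} (he : 0 ≤ e) :
    S.Fobj z ≤ S.Feps z e :=
  S.Feps_zero z ▸ S.Feps_mono z le_rfl he

-- `F(·, ε)` is majorized at `x` by `f + λ Σᵢ w(xᵢ, εᵢ)|·ᵢ|` up to a constant.
lemma Feps_sub_le (x y : EuclideanSpace ℝ (Fin n)) {e : Fin n → ℝ} (he : ∀ i, 0 < e i) :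
    S.Feps y e - S.Feps x e ≤ (S.f y + S.lam * ∑ i, wfun S.p (x i) (e i) * |y i|)
      - (S.f x + S.lam * ∑ i, wfun S.p (x i) (e i) * |x i|) := by
  have htangent : ∀ i, (|y i| + e i) ^ S.p
      ≤ (|x i| + e i) ^ S.p + wfun S.p (x i) (e i) * (|y i| - |x i|) := fun i => by
    have := Real.rpow_le_rpow_add_mul_rpow_sub_one_mul
      (add_pos_of_nonneg_of_pos (abs_nonneg (x i)) (he i))
      (add_nonneg (abs_nonneg (y i)) (he i).le) S.hp0.le S.hp1.le
    rw [wfun]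
    linarith
  have hsum := Finset.sum_le_sum fun i (_ : i ∈ Finset.univ) => htangent i
  simp only [Finset.sum_add_distrib, mul_sub, Finset.sum_sub_distrib] at hsum
  have := mul_le_mul_of_nonneg_left hsum S.hlam.le
  simp only [Feps]
  linarith

lemma f_add_weighted_abs_succ_le (k : ℕ) :
    S.f (S.x (k + 1)) + S.lam * ∑ i, wfun S.p (S.x k i) (S.eps k i) * |S.x (k + 1) i|
      ≤ S.f (S.x k) + S.lam * ∑ i, wfun S.p (S.x k i) (S.eps k i) * |S.x k i| := by
  have hh : ConvexOn ℝ Set.univ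
      (fun z : EuclideanSpace ℝ (Fin n) => S.lam * ∑ i, wfun S.p (S.x k i) (S.eps k i) * |z i|) :=
    (convexOn_sum_mul_abs fun i => wfun_nonneg S.hp0.le (S.heps_pos k i).le).smul S.hlam.le
  have := sufficient_decrease_of_forall_model_le S.hf_diff S.hf_lip (S.hQ_diff k _)
    (S.hQ_grad k) (strongConvexOn_iff_convex.2 (S.hQ_sconv k)) hh (S.hmin k)
  nlinarith [S.hM, sq_nonneg ‖S.x (k + 1) - S.x k‖]

lemma eps_succ_le (k : ℕ) : S.eps (k + 1) ≤ S.eps k := fun i =>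
  (S.heps_dec k i).trans (mul_le_of_le_one_left (S.heps_pos k i).le S.hmu1.le)

lemma Feps_succ_le (k : ℕ) :
    S.Feps (S.x (k + 1)) (S.eps (k + 1)) ≤ S.Feps (S.x k) (S.eps k) :=
  calc S.Feps (S.x (k + 1)) (S.eps (k + 1))
      ≤ S.Feps (S.x (k + 1)) (S.eps k) :=
        S.Feps_mono _ (fun i => (S.heps_pos (k + 1) i).le) (S.eps_succ_le k)
    _ ≤ S.Feps (S.x k) (S.eps k) := by
        linarith [S.Feps_sub_le (S.x k) (S.x (k + 1)) (S.heps_pos k),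
          S.f_add_weighted_abs_succ_le k]

lemma Feps_le_Feps_zero (k : ℕ) : S.Feps (S.x k) (S.eps k) ≤ S.Feps (S.x 0) (S.eps 0) :=
  antitone_nat_of_succ_le (f := fun k => S.Feps (S.x k) (S.eps k)) S.Feps_succ_le
    (Nat.zero_le k)

lemma abs_gradient_Q_le {R : ℝ} (hR : ∀ k, ‖S.x k‖ ≤ R) (k : ℕ) (i : Fin n) :
    |gradient (S.Q k) (S.x (k + 1)) i| ≤ ‖gradient S.f 0‖ + |S.Lf| * R + |S.L| * (2 * R) := by
  have hQ := norm_le_add_abs_mul_of_lipschitz (S.hQ_lip k) (S.x (k + 1)) (S.x k)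
  have hf := norm_le_add_abs_mul_of_lipschitz S.hf_lip (S.x k) 0
  rw [S.hQ_grad k] at hQ
  rw [norm_zero, add_zero] at hf
  calc |gradient (S.Q k) (S.x (k + 1)) i| ≤ ‖gradient (S.Q k) (S.x (k + 1))‖ :=
        Real.norm_eq_abs _ ▸ PiLp.norm_apply_le _ i
    _ ≤ ‖gradient S.f 0‖ + |S.Lf| * ‖S.x k‖ + |S.L| * (‖S.x (k + 1)‖ + ‖S.x k‖) := by linarith
    _ ≤ ‖gradient S.f 0‖ + |S.Lf| * R + |S.L| * (2 * R) := by
        gcongr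
        · exact hR k
        · linarith [hR k, hR (k + 1)]

end IRL1

/-- In the IRL1 setting with bounded level set, every iterate `x^k`
lies in the level set `{x : F(x) ≤ F(x⁰, ε⁰)}`, and there exists `C > 0` with
`‖∇Q_k(x^{k+1})‖_∞ ≤ C` for all `k`. -/
theorem stmt6 {n : ℕ} (S : IRL1 n) (hbdd : S.LevelBounded) :
    (∀ k : ℕ, S.Fobj (S.x k) ≤ S.Feps (S.x 0) (S.eps 0)) ∧
    ∃ C > (0 : ℝ), ∀ (k : ℕ) (i : Fin n), |gradient (S.Q k) (S.x (k + 1)) i| ≤ C := by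
  have hlevel : ∀ k, S.Fobj (S.x k) ≤ S.Feps (S.x 0) (S.eps 0) := fun k =>
    (S.Fobj_le_Feps _ fun i => (S.heps_pos k i).le).trans (S.Feps_le_Feps_zero k)
  refine ⟨hlevel, ?_⟩
  obtain ⟨R, hR⟩ := hbdd.subset_closedBall 0
  have hxR : ∀ k, ‖S.x k‖ ≤ R := fun k => by simpa using hR (hlevel k)
  exact ⟨max (‖gradient S.f 0‖ + |S.Lf| * R + |S.L| * (2 * R)) 1, lt_max_of_lt_right one_pos,
    fun k i => le_max_of_le_left (S.abs_gradient_Q_le hxR k i)⟩
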